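/- Let n ≥ 2, z : Fin n → ℝ, y : Fin n with z y = max_i z i, β ≥ 0, and j : Fin n with j ≠ y. Define the off-class gradient rescaling factor γ_j = exp((β - 1) · z j) · (∑_i exp (z i)) / (∑_i exp (β (z i))). Then γ_j ≤ (1 + (n - 1) · exp(M' - M)) · exp((1 - β) · (M - z j)), where M = max_i z i and M' = max_{i ≠ y} z i. -/
import Mathlib


open Real Finset

/-- Upper bound on the off-class gradient rescaling factor `γ_j` for `j ≠ y`:
`γ_j ≤ (1 + (n-1) * exp(M' - M)) * exp((1 - β)(M - z j))` where `M = max_i z i`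
and `M' = max_{i ≠ y} z i`. -/
theorem gamma_off_class_upper_bound (n : ℕ) (hn : 2 ≤ n) (z : Fin n → ℝ) (y : Fin n)
    (hy : z y = Finset.univ.sup' (Finset.univ_nonempty_iff.mpr ⟨y⟩) z)
    (β : ℝ) (hβ : 0 ≤ β) (j : Fin n) (hj : j ≠ y) (γ M M' : ℝ)
    (hγ : γ = Real.exp ((β - 1) * z j) * (∑ i, Real.exp (z i)) / ∑ i, Real.exp (β * z i))
    (hM : M = Finset.univ.sup' (Finset.univ_nonempty_iff.mpr ⟨y⟩) z)
    (hM' : M' = (Finset.univ.erase y).sup'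
      (by rw [← Finset.card_pos, Finset.card_erase_of_mem (Finset.mem_univ y),
        Finset.card_univ, Fintype.card_fin]; omega) z) :
    γ ≤ (1 + ((n : ℝ) - 1) * Real.exp (M' - M)) * Real.exp ((1 - β) * (M - z j)) := by
  have hM'z : ∀ i, i ≠ y → z i ≤ M' := fun i hi =>
    hM' ▸ Finset.le_sup' z (Finset.mem_erase.mpr ⟨hi, Finset.mem_univ i⟩)
  have hSβ : Real.exp (β * M) ≤ ∑ i, Real.exp (β * z i) := by
    have h : Real.exp (β * z y) ≤ ∑ i, Real.exp (β * z i) :=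
      Finset.single_le_sum (fun i _ => (Real.exp_pos (β * z i)).le) (Finset.mem_univ y)
    rwa [hy, ← hM] at h
  have hS : ∑ i, Real.exp (z i) ≤ Real.exp M + ((n : ℝ) - 1) * Real.exp M' := by
    rw [← Finset.add_sum_erase _ _ (Finset.mem_univ y)]
    have h1 : Real.exp (z y) = Real.exp M := by rw [hy, hM]
    have h2 : ∑ i ∈ Finset.univ.erase y, Real.exp (z i) ≤ ((n : ℝ) - 1) * Real.exp M' := by
      calc ∑ i ∈ Finset.univ.erase y, Real.exp (z i)
          ≤ ∑ _i ∈ Finset.univ.erase y, Real.exp M' :=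
            Finset.sum_le_sum fun i hi =>
              Real.exp_le_exp.mpr (hM'z i (Finset.mem_erase.mp hi).1)
        _ = ((n : ℝ) - 1) * Real.exp M' := by
            rw [Finset.sum_const, Finset.card_erase_of_mem (Finset.mem_univ y),
              Finset.card_univ, Fintype.card_fin, nsmul_eq_mul,
              Nat.cast_sub (by omega : 1 ≤ n), Nat.cast_one]
    linarith
  have key : γ ≤ Real.exp ((β - 1) * z j) * (Real.exp M + ((n : ℝ) - 1) * Real.exp M')
      / Real.exp (β * M) := by
    rw [hγ]
    have h1 := Real.exp_pos M
    have h2 := Real.exp_pos M'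
    have hn1 : (1:ℝ) ≤ (n:ℝ) := by exact_mod_cast (by omega : 1 ≤ n)
    exact div_le_div₀ (mul_nonneg (Real.exp_pos _).le (by nlinarith))
      (mul_le_mul_of_nonneg_left hS (Real.exp_pos _).le) (Real.exp_pos _) hSβ
  refine key.trans_eq ?_
  have e1 : (β - 1) * z j = β * z j - z j := by ring
  have e2 : (1 - β) * (M - z j) = (M + β * z j) - (z j + β * M) := by ring
  rw [e1, e2, Real.exp_sub, Real.exp_sub, Real.exp_sub, Real.exp_add]
  field_simp
  simp only [Real.exp_add]
  ring
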